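/- Under calibration constraints ∑ᵢ∑ⱼ(Aᵢⱼ/êᵢⱼ)Xᵢⱼ = ∑ᵢ∑ⱼ((1−Aᵢⱼ)/(1−êᵢⱼ))Xᵢⱼ = ∑ᵢ∑ⱼXᵢⱼ and cluster constraints ∑ⱼAᵢⱼ/êᵢⱼ = ∑ⱼ(1−Aᵢⱼ)/(1−êᵢⱼ) = nᵢ, if Yᵢⱼ(a) = βₐᵀXᵢⱼ + μₐ(Uᵢ) for a = 0,1, then the IPTW estimator (1/n)∑ᵢ∑ⱼ{AᵢⱼYᵢⱼ/êᵢⱼ − (1−Aᵢⱼ)Yᵢⱼ/(1−êᵢⱼ)} with Yᵢⱼ = AᵢⱼYᵢⱼ(1)+(1−Aᵢⱼ)Yᵢⱼ(0) equals the exact finite-sample average treatment effect (1/n)∑ᵢ∑ⱼ{Yᵢⱼ(1) − Yᵢⱼ(0)}. -/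

import Mathlib

/-!
On the treated units the IPTW summand is `(A/ê) Y(1)`, on the controls `((1-A)/(1-ê)) Y(0)`.
Both families of weights are calibrated: they reproduce the covariate total and every cluster
size. Since `Y(a)` is a linear function of `X` plus a cluster effect, the weighted total of
`Y(a)` is then a linear function of the weighted covariate total plus the cluster effects
weighted by the cluster sizes, i.e. the unweighted total of `Y(a)`.
-/

open Finset

section CalibratedWeights

variable {R ι p : Type*} [CommSemiring R] [Fintype ι] [Fintype p] {κ : ι → Type*}
  [∀ i, Fintype (κ i)]

theorem sum_sum_mul_dotProduct (w : ∀ i, κ i → R) (X : ∀ i, κ i → p → R) (β : p → R) :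
    ∑ i, ∑ j, w i j * (β ⬝ᵥ X i j) = β ⬝ᵥ ∑ i, ∑ j, w i j • X i j := by
  simp only [dotProduct_sum, dotProduct_smul, smul_eq_mul]

theorem sum_sum_mul_eq_sum_sum_of_calibrated (w : ∀ i, κ i → R) (X : ∀ i, κ i → p → R)
    (β : p → R) (c : ι → R) (Y : ∀ i, κ i → R) (hY : ∀ i j, Y i j = β ⬝ᵥ X i j + c i)
    (hX : ∑ i, ∑ j, w i j • X i j = ∑ i, ∑ j, X i j)
    (hw : ∀ i, ∑ j, w i j = Fintype.card (κ i)) :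
    ∑ i, ∑ j, w i j * Y i j = ∑ i, ∑ j, Y i j := by
  simp only [hY, mul_add, sum_add_distrib, ← sum_mul, hw, sum_const, card_univ, nsmul_eq_mul]
  rw [sum_sum_mul_dotProduct, hX]
  simp only [dotProduct_sum]

end CalibratedWeights

theorem ipw_contrast_eq_of_mem_zero_one {K : Type*} [Field K] {a e y₀ y₁ : K} (ha : a = 0 ∨ a = 1) :
    a * (a * y₁ + (1 - a) * y₀) / e - (1 - a) * (a * y₁ + (1 - a) * y₀) / (1 - e)
      = a / e * y₁ - (1 - a) / (1 - e) * y₀ := by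
  rcases ha with rfl | rfl <;> ring

theorem stmt_10_general {m p : ℕ} (n : Fin m → ℕ)
    (X : (i : Fin m) → Fin (n i) → Fin p → ℝ) (U : Fin m → ℝ)
    (A : (i : Fin m) → Fin (n i) → ℝ) (hA01 : ∀ i j, A i j = 0 ∨ A i j = 1)
    (ehat : (i : Fin m) → Fin (n i) → ℝ)
    (β0 β1 : Fin p → ℝ) (μ0 μ1 : ℝ → ℝ)
    (Y0 Y1 Y : (i : Fin m) → Fin (n i) → ℝ)
    (hY0 : ∀ i j, Y0 i j = (∑ k, β0 k * X i j k) + μ0 (U i))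
    (hY1 : ∀ i j, Y1 i j = (∑ k, β1 k * X i j k) + μ1 (U i))
    (hY : ∀ i j, Y i j = A i j * Y1 i j + (1 - A i j) * Y0 i j)
    (hcalX1 : ∑ i, ∑ j, (A i j / ehat i j) • X i j = ∑ i, ∑ j, X i j)
    (hcalX0 : ∑ i, ∑ j, ((1 - A i j) / (1 - ehat i j)) • X i j = ∑ i, ∑ j, X i j)
    (hcal1 : ∀ i, ∑ j, A i j / ehat i j = (n i : ℝ))
    (hcal0 : ∀ i, ∑ j, (1 - A i j) / (1 - ehat i j) = (n i : ℝ)) :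
    (1 / (∑ i, (n i : ℝ))) *
        ∑ i, ∑ j, (A i j * Y i j / ehat i j - (1 - A i j) * Y i j / (1 - ehat i j))
      = (1 / (∑ i, (n i : ℝ))) * ∑ i, ∑ j, (Y1 i j - Y0 i j) := by
  have htreated := sum_sum_mul_eq_sum_sum_of_calibrated _ X β1 (μ1 ∘ U) Y1 hY1 hcalX1
    (by simpa using hcal1)
  have hcontrol := sum_sum_mul_eq_sum_sum_of_calibrated _ X β0 (μ0 ∘ U) Y0 hY0 hcalX0
    (by simpa using hcal0)
  simp only [hY, ipw_contrast_eq_of_mem_zero_one (hA01 _ _), sum_sub_distrib, htreated, hcontrol]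

/-- Under sample-level covariate calibration and cluster-level calibration, if
`Yᵢⱼ(a) = βₐᵀXᵢⱼ + μₐ(Uᵢ)` for `a = 0,1`, then the IPTW estimator equals the exact
finite-sample average treatment effect. -/
theorem stmt_10 {m p : ℕ} (n : Fin m → ℕ)
    (X : (i : Fin m) → Fin (n i) → Fin p → ℝ) (U : Fin m → ℝ)
    (A : (i : Fin m) → Fin (n i) → ℝ) (hA01 : ∀ i j, A i j = 0 ∨ A i j = 1)
    (ehat : (i : Fin m) → Fin (n i) → ℝ) (he : ∀ i j, 0 < ehat i j ∧ ehat i j < 1)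
    (β0 β1 : Fin p → ℝ) (μ0 μ1 : ℝ → ℝ)
    (Y0 Y1 Y : (i : Fin m) → Fin (n i) → ℝ)
    (hY0 : ∀ i j, Y0 i j = (∑ k, β0 k * X i j k) + μ0 (U i))
    (hY1 : ∀ i j, Y1 i j = (∑ k, β1 k * X i j k) + μ1 (U i))
    (hY : ∀ i j, Y i j = A i j * Y1 i j + (1 - A i j) * Y0 i j)
    (hcalX1 : ∑ i, ∑ j, (A i j / ehat i j) • X i j = ∑ i, ∑ j, X i j)
    (hcalX0 : ∑ i, ∑ j, ((1 - A i j) / (1 - ehat i j)) • X i j = ∑ i, ∑ j, X i j)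
    (hcal1 : ∀ i, ∑ j, A i j / ehat i j = (n i : ℝ))
    (hcal0 : ∀ i, ∑ j, (1 - A i j) / (1 - ehat i j) = (n i : ℝ)) :
    (1 / (∑ i, (n i : ℝ))) *
        ∑ i, ∑ j, (A i j * Y i j / ehat i j - (1 - A i j) * Y i j / (1 - ehat i j))
      = (1 / (∑ i, (n i : ℝ))) * ∑ i, ∑ j, (Y1 i j - Y0 i j) :=
  stmt_10_general n X U A hA01 ehat β0 β1 μ0 μ1 Y0 Y1 Y hY0 hY1 hY hcalX1 hcalX0 hcal1 hcal0
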